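/- Let α ∈ R, let A be a Hermitian q×q complex matrix, and let W_A(z) := [[(z−α)I_q, A], [−(z−α)A⁺, I_q − A⁺A]]. Then for every z ∈ C, W_A(z)* (−J) W_A(z) = diag((z−α)I_q, I_q)* (−J) diag((z−α)I_q, I_q), where J = [[0, −iI_q], [iI_q, 0]]. -/
import Mathlib

open Matrix

/-- `X` is the Moore–Penrose inverse of `A`. -/
def IsMoorePenrose {p q : ℕ} (A : Matrix (Fin p) (Fin q) ℂ)
    (X : Matrix (Fin q) (Fin p) ℂ) : Prop :=
  A * X * A = A ∧ X * A * X = X ∧ (A * X)ᴴ = A * X ∧ (X * A)ᴴ = X * A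

/-- The `2q × 2q` signature matrix `J = [[0, −iI], [iI, 0]]`. -/
def Jmat (q : ℕ) : Matrix (Fin q ⊕ Fin q) (Fin q ⊕ Fin q) ℂ :=
  Matrix.fromBlocks 0 (-(Complex.I • (1 : Matrix (Fin q) (Fin q) ℂ)))
    (Complex.I • (1 : Matrix (Fin q) (Fin q) ℂ)) 0

lemma mp_unique {q : ℕ} (A : Matrix (Fin q) (Fin q) ℂ)
    (X X' : Matrix (Fin q) (Fin q) ℂ)
    (h : IsMoorePenrose A X) (h' : IsMoorePenrose A X') : X = X' := by
  obtain ⟨h1, h2, h3, h4⟩ := h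
  obtain ⟨h1', h2', h3', h4'⟩ := h'
  have key1 : X = X * A * X' := by
    calc X = X * A * X := h2.symm
    _ = X * (A * X)ᴴ := by rw [h3, Matrix.mul_assoc]
    _ = X * Xᴴ * Aᴴ := by rw [Matrix.conjTranspose_mul]; noncomm_ring
    _ = X * Xᴴ * (A * X' * A)ᴴ := by rw [h1']
    _ = X * Xᴴ * (Aᴴ * (A * X')) := by rw [Matrix.conjTranspose_mul, h3']
    _ = X * (Xᴴ * Aᴴ) * (A * X') := by noncomm_ring
    _ = X * (A * X)ᴴ * (A * X') := by rw [Matrix.conjTranspose_mul]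
    _ = X * A * X * (A * X') := by rw [h3]; noncomm_ring
    _ = X * A * X * A * X' := by noncomm_ring
    _ = X * (A * X * A) * X' := by noncomm_ring
    _ = X * A * X' := by rw [h1]
  have key2 : X' = X * A * X' := by
    calc X' = X' * A * X' := h2'.symm
    _ = (X' * A)ᴴ * X' := by rw [h4']
    _ = Aᴴ * X'ᴴ * X' := by rw [Matrix.conjTranspose_mul]
    _ = (A * X * A)ᴴ * X'ᴴ * X' := by rw [h1]
    _ = (X * A)ᴴ * Aᴴ * X'ᴴ * X' := by simp only [Matrix.conjTranspose_mul]; noncomm_ring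
    _ = X * A * (Aᴴ * X'ᴴ) * X' := by rw [h4]; noncomm_ring
    _ = X * A * (X' * A)ᴴ * X' := by rw [Matrix.conjTranspose_mul]
    _ = X * A * (X' * A * X') := by rw [h4']; noncomm_ring
    _ = X * A * X' := by rw [h2']
  rw [key1, ← key2]

/-- for Hermitian `A`,
`W_A(z)ᴴ (−J) W_A(z) = diag((z−α)I, I)ᴴ (−J) diag((z−α)I, I)`. -/
theorem stmt14 {q : ℕ} (α : ℝ) (A Y : Matrix (Fin q) (Fin q) ℂ)
    (hA : A.IsHermitian) (hY : IsMoorePenrose A Y) (z : ℂ) :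
    (Matrix.fromBlocks ((z - (α : ℂ)) • (1 : Matrix (Fin q) (Fin q) ℂ)) A
          (-((z - (α : ℂ)) • Y)) (1 - Y * A))ᴴ * (-(Jmat q)) *
        Matrix.fromBlocks ((z - (α : ℂ)) • (1 : Matrix (Fin q) (Fin q) ℂ)) A
          (-((z - (α : ℂ)) • Y)) (1 - Y * A) =
      (Matrix.fromBlocks ((z - (α : ℂ)) • (1 : Matrix (Fin q) (Fin q) ℂ)) 0 0
          (1 : Matrix (Fin q) (Fin q) ℂ))ᴴ * (-(Jmat q)) *
        Matrix.fromBlocks ((z - (α : ℂ)) • (1 : Matrix (Fin q) (Fin q) ℂ)) 0 0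
          (1 : Matrix (Fin q) (Fin q) ℂ) := by
  obtain ⟨h1, h2, h3, h4⟩ := hY
  have hAH : Aᴴ = A := hA
  have e34 : A * Yᴴ = Y * A := by conv_lhs => rw [← hAH, ← Matrix.conjTranspose_mul, h4]
  have e43 : Yᴴ * A = A * Y := by conv_lhs => rw [← hAH, ← Matrix.conjTranspose_mul, h3]
  have hYH : Yᴴ = Y := by
    apply mp_unique A
    · refine ⟨?_, ?_, ?_, ?_⟩
      · have := congrArg Matrix.conjTranspose h1
        simpa [Matrix.conjTranspose_mul, hAH, Matrix.mul_assoc] using this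
      · have := congrArg Matrix.conjTranspose h2
        simpa [Matrix.conjTranspose_mul, hAH, Matrix.mul_assoc] using this
      · rw [e34]; exact h4
      · rw [e43]; exact h3
    · exact ⟨h1, h2, h3, h4⟩
  have hcomm : A * Y = Y * A := by
    rw [← h3, Matrix.conjTranspose_mul, hYH, hAH]
  have hYAA : Y * A * A = A := by rw [← hcomm, Matrix.mul_assoc, ← Matrix.mul_assoc, h1]
  have hAYA : A * (Y * A) = A := by rw [← Matrix.mul_assoc, hcomm, hYAA]
  have e1 : (((z:ℂ) - α) • Y)ᴴ = (starRingEnd ℂ (z - α)) • Y := by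
    rw [Matrix.conjTranspose_smul, hYH]; rfl
  have e2 : (1 - Y * A)ᴴ = 1 - Y * A := by
    rw [Matrix.conjTranspose_sub, Matrix.conjTranspose_one, h4]
  simp only [Jmat, Matrix.fromBlocks_conjTranspose, Matrix.fromBlocks_neg,
    Matrix.fromBlocks_multiply, Matrix.conjTranspose_smul, Matrix.conjTranspose_one,
    Matrix.conjTranspose_neg, e1, e2, hAH]
  simp only [mul_zero, zero_mul, mul_neg, neg_mul, neg_neg, neg_zero, add_zero, zero_add,
    Matrix.conjTranspose_zero, mul_one, one_mul, Matrix.mul_one, Matrix.one_mul]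
  rw [Matrix.fromBlocks_inj]
  have hAY' : A * Y = Y * A := hcomm
  refine ⟨?_, ?_, ?_, ?_⟩
  · simp [Matrix.smul_mul, Matrix.mul_smul, smul_smul, mul_comm, mul_left_comm]
  · simp [Matrix.smul_mul, Matrix.mul_smul, smul_smul, mul_sub, Matrix.mul_sub, Matrix.sub_mul,
      smul_sub, mul_comm, mul_left_comm]
  · simp [Matrix.smul_mul, Matrix.mul_smul, smul_smul, Matrix.sub_mul, Matrix.mul_sub, smul_sub,
      hcomm, hYAA, hAYA, mul_comm, mul_left_comm]
    abel
  · simp [Matrix.smul_mul, Matrix.mul_smul, smul_smul, Matrix.sub_mul, Matrix.mul_sub,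
      smul_sub, hcomm, hYAA, hAYA, Matrix.mul_assoc]
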